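/- arXiv:1510.08368 — 3 statements merged into one kernel-verified Lean document; each statement's English description precedes it below -/
import Mathlib

section
/- If a K-reachable set C ⊆ ℝⁿ is 1-reachable (i.e., K = 1 works with respect to the Euclidean norm), then C is convex, provided C is closed. -/
open Set

/-! By the mean value inequality, a curve from `x` to `y` whose speed on `[0, 1]` is at most
`‖y - x‖` satisfies `dist x (γ t) ≤ t * dist x y` and `dist (γ t) y ≤ (1 - t) * dist x y`.
The triangle inequality forces equality in both, and in a strictly convex space (such as
Euclidean space) this pins `γ t` down as the point `lineMap x y t` of the segment. Hence the
whole segment `[x, y]` lies on the curve, and so in `C`. -/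

section StrictConvexSpace

variable {E : Type*} [NormedAddCommGroup E] [NormedSpace ℝ E] [StrictConvexSpace ℝ E]

theorem eq_lineMap_of_dist_le_mul_of_dist_le_mul {x y z : E} {t : ℝ}
    (hxz : dist x z ≤ t * dist x y) (hzy : dist z y ≤ (1 - t) * dist x y) :
    z = AffineMap.lineMap x y t := by
  have htri : dist x y ≤ dist x z + dist z y := dist_triangle x z y
  exact eq_lineMap_of_dist_eq_mul_of_dist_eq_mul (by linarith) (by linarith)

theorem eqOn_lineMap_of_norm_deriv_le {γ : ℝ → E} {x y : E}
    (hγ : ∀ r ∈ Icc (0 : ℝ) 1, DifferentiableAt ℝ γ r) (h0 : γ 0 = x) (h1 : γ 1 = y)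
    (hbound : ∀ r ∈ Icc (0 : ℝ) 1, ‖deriv γ r‖ ≤ ‖y - x‖) :
    EqOn γ (AffineMap.lineMap x y) (Icc 0 1) := by
  intro t ht
  have hlip {r s : ℝ} (hr : r ∈ Icc (0 : ℝ) 1) (hs : s ∈ Icc (0 : ℝ) 1) :
      ‖γ s - γ r‖ ≤ ‖y - x‖ * ‖s - r‖ :=
    (convex_Icc 0 1).norm_image_sub_le_of_norm_deriv_le hγ hbound hr hs
  have hleft := hlip (left_mem_Icc.2 zero_le_one) ht
  have hright := hlip ht (right_mem_Icc.2 zero_le_one)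
  rw [h0, Real.norm_of_nonneg (sub_nonneg.2 ht.1), sub_zero] at hleft
  rw [h1, Real.norm_of_nonneg (sub_nonneg.2 ht.2)] at hright
  apply eq_lineMap_of_dist_le_mul_of_dist_le_mul
  · rwa [dist_comm, dist_eq_norm, dist_eq_norm', mul_comm]
  · rwa [dist_eq_norm', dist_eq_norm', mul_comm]

end StrictConvexSpace

theorem stmt5_general {n : ℕ} (C : Set (EuclideanSpace ℝ (Fin n)))
    (h1 : ∀ x₀ ∈ C, ∀ y₀ ∈ C, ∃ γ : ℝ → EuclideanSpace ℝ (Fin n),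
      ContDiff ℝ 1 γ ∧ MapsTo γ (Icc (0 : ℝ) 1) C ∧ γ 0 = x₀ ∧ γ 1 = y₀ ∧
      ∀ r ∈ Icc (0 : ℝ) 1, ‖deriv γ r‖ ≤ ‖y₀ - x₀‖) :
    Convex ℝ C := by
  refine convex_iff_segment_subset.2 fun x hx y hy => ?_
  obtain ⟨γ, hγ, hmaps, hγ0, hγ1, hbound⟩ := h1 x hx y hy
  have hsegment := eqOn_lineMap_of_norm_deriv_le
    (fun r _ => hγ.differentiable one_ne_zero r) hγ0 hγ1 hbound
  rw [segment_eq_image_lineMap]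
  rintro _ ⟨t, ht, rfl⟩
  exact hsegment ht ▸ hmaps ht

/-- A closed 1-reachable subset of ℝⁿ (Euclidean norm) is convex. -/
theorem stmt5 {n : ℕ} (C : Set (EuclideanSpace ℝ (Fin n))) (hC : IsClosed C)
    (h1 : ∀ x₀ ∈ C, ∀ y₀ ∈ C, ∃ γ : ℝ → EuclideanSpace ℝ (Fin n),
      ContDiff ℝ 1 γ ∧ MapsTo γ (Icc (0 : ℝ) 1) C ∧ γ 0 = x₀ ∧ γ 1 = y₀ ∧
      ∀ r ∈ Icc (0 : ℝ) 1, ‖deriv γ r‖ ≤ ‖y₀ - x₀‖) :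
    Convex ℝ C :=
  stmt5_general C h1
end

section
/- Let f : ℝⁿ → ℝⁿ be continuously differentiable and suppose that for some c > 0 the operator norm bound μ(Df(x)) ≤ −c holds for all x in a convex forward-invariant set C, where μ is the matrix measure induced by the Euclidean norm (i.e., the symmetric part of Df(x) has all eigenvalues ≤ −c). Then any two solutions x(t), y(t) of ẋ = f(x) with initial conditions in C satisfy |x(t) − y(t)| ≤ e^{−c(t−t₀)}|x(t₀) − y(t₀)| for all t ≥ t₀. -/
/-!
A Jacobian bound `⟪Df(z) v, v⟫ ≤ -c‖v‖²` on a convex set integrates along segments to the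
one-sided Lipschitz bound `⟪f a - f b, a - b⟫ ≤ -c‖a - b‖²`. For the difference `e = x - y` of
two solutions this gives `d/dt ‖e‖² ≤ -2c‖e‖²`, so `exp (2c(t - t₀)) ‖e t‖²` is antitone.
-/

open Set

variable {E : Type*} [NormedAddCommGroup E] [InnerProductSpace ℝ E]

theorem Convex.inner_sub_sub_le_of_inner_fderiv_le {f : E → E} {C : Set E} (hC : Convex ℝ C)
    (hf : ∀ z ∈ C, DifferentiableAt ℝ f z) {c : ℝ}
    (hfC : ∀ z ∈ C, ∀ v, inner ℝ (fderiv ℝ f z v) v ≤ -c * ‖v‖ ^ 2)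
    {a b : E} (ha : a ∈ C) (hb : b ∈ C) :
    inner ℝ (f a - f b) (a - b) ≤ -c * ‖a - b‖ ^ 2 := by
  set w := a - b
  have hseg : ∀ s ∈ Icc (0 : ℝ) 1, b + s • w ∈ C := fun s hs => hC.add_smul_sub_mem hb ha hs
  have hφ : ∀ s ∈ Icc (0 : ℝ) 1, HasDerivAt (fun s : ℝ => inner ℝ (f (b + s • w)) w)
      (inner ℝ (fderiv ℝ f (b + s • w) w) w) s := by
    intro s hs
    have hline : HasDerivAt (fun s : ℝ => b + s • w) w s := by
      simpa using ((hasDerivAt_id s).smul_const w).const_add b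
    simpa using
      ((hf _ (hseg s hs)).hasFDerivAt.comp_hasDerivAt s hline).inner ℝ (hasDerivAt_const s w)
  have hmvt := (convex_Icc (0 : ℝ) 1).image_sub_le_mul_sub_of_deriv_le
    (fun s hs => (hφ s hs).continuousAt.continuousWithinAt)
    (fun s hs => (hφ s (interior_subset hs)).differentiableAt.differentiableWithinAt)
    (fun s hs => (hφ s (interior_subset hs)).deriv ▸ hfC _ (hseg s (interior_subset hs)) w)
    0 (left_mem_Icc.2 zero_le_one) 1 (right_mem_Icc.2 zero_le_one) zero_le_one
  simp only [zero_smul, add_zero, one_smul, sub_zero, mul_one, w, add_sub_cancel] at hmvt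
  rwa [inner_sub_left]

theorem norm_le_exp_mul_norm_of_inner_deriv_le {u u' : ℝ → E} {c t₀ : ℝ}
    (hu : ∀ t, t₀ ≤ t → HasDerivAt u (u' t) t)
    (hdiss : ∀ t, t₀ ≤ t → inner ℝ (u t) (u' t) ≤ -c * ‖u t‖ ^ 2) {t : ℝ} (ht : t₀ ≤ t) :
    ‖u t‖ ≤ Real.exp (-c * (t - t₀)) * ‖u t₀‖ := by
  set g : ℝ → ℝ := fun t => Real.exp (2 * c * (t - t₀)) * ‖u t‖ ^ 2
  have hg : ∀ t, t₀ ≤ t → HasDerivAt g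
      (Real.exp (2 * c * (t - t₀)) * (2 * c * ‖u t‖ ^ 2 + 2 * inner ℝ (u t) (u' t))) t := by
    intro t ht
    have hexp : HasDerivAt (fun t => Real.exp (2 * c * (t - t₀)))
        (Real.exp (2 * c * (t - t₀)) * (2 * c)) t := by
      simpa using (((hasDerivAt_id t).sub_const t₀).const_mul (2 * c)).exp
    exact (hexp.mul (hu t ht).norm_sq).congr_deriv (by ring)
  have hanti : AntitoneOn g (Ici t₀) := by
    refine antitoneOn_of_hasDerivWithinAt_nonpos (convex_Ici t₀)
      (fun t ht => (hg t ht).continuousAt.continuousWithinAt)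
      (fun t ht => (hg t (interior_subset ht)).hasDerivWithinAt) fun t ht => ?_
    have ht : t₀ ≤ t := interior_subset ht
    nlinarith [Real.exp_pos (2 * c * (t - t₀)), hdiss t ht]
  have hsq : ‖u t‖ ^ 2 ≤ (Real.exp (-c * (t - t₀)) * ‖u t₀‖) ^ 2 := by
    have hgt : g t ≤ g t₀ := hanti self_mem_Ici ht ht
    have hexp : Real.exp (-c * (t - t₀)) ^ 2 * Real.exp (2 * c * (t - t₀)) = 1 := by
      rw [← Real.exp_nat_mul, ← Real.exp_add, ← Real.exp_zero]
      congr 1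
      push_cast
      ring
    simp only [g, sub_self, mul_zero, Real.exp_zero, one_mul] at hgt
    nlinarith [sq_nonneg (Real.exp (-c * (t - t₀)))]
  exact (pow_le_pow_iff_left₀ (norm_nonneg _) (by positivity) two_ne_zero).1 hsq

theorem stmt11_general {n : ℕ} (f : EuclideanSpace ℝ (Fin n) → EuclideanSpace ℝ (Fin n))
    (hf : ContDiff ℝ 1 f) (C : Set (EuclideanSpace ℝ (Fin n))) (hconv : Convex ℝ C)
    (c : ℝ)
    (hμ : ∀ x ∈ C, ∀ v : EuclideanSpace ℝ (Fin n),
      (inner ℝ (fderiv ℝ f x v) v : ℝ) ≤ -c * ‖v‖ ^ 2)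
    (t₀ : ℝ) (x y : ℝ → EuclideanSpace ℝ (Fin n))
    (hx : ∀ t, t₀ ≤ t → HasDerivAt x (f (x t)) t)
    (hy : ∀ t, t₀ ≤ t → HasDerivAt y (f (y t)) t)
    (hxC : ∀ t, t₀ ≤ t → x t ∈ C) (hyC : ∀ t, t₀ ≤ t → y t ∈ C) :
    ∀ t, t₀ ≤ t → ‖x t - y t‖ ≤ Real.exp (-c * (t - t₀)) * ‖x t₀ - y t₀‖ := by
  have hoslip : ∀ t, t₀ ≤ t →
      inner ℝ (x t - y t) (f (x t) - f (y t)) ≤ -c * ‖x t - y t‖ ^ 2 := fun t ht => by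
    rw [real_inner_comm]
    exact hconv.inner_sub_sub_le_of_inner_fderiv_le
      (fun z _ => (hf.differentiable one_ne_zero) z) hμ (hxC t ht) (hyC t ht)
  exact fun t ht => norm_le_exp_mul_norm_of_inner_deriv_le
    (fun s hs => (hx s hs).sub (hy s hs)) hoslip ht

/-- Euclidean contraction theorem: if the symmetric part of the Jacobian of `f`
satisfies `μ₂(Df(x)) ≤ -c` on a convex forward-invariant set `C` (expressed as
`⟪Df(x)v, v⟫ ≤ -c‖v‖²`), then any two solutions remaining in `C` converge
exponentially with rate `c`. -/
theorem stmt11 {n : ℕ} (f : EuclideanSpace ℝ (Fin n) → EuclideanSpace ℝ (Fin n))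
    (hf : ContDiff ℝ 1 f) (C : Set (EuclideanSpace ℝ (Fin n))) (hconv : Convex ℝ C)
    (c : ℝ) (hc : 0 < c)
    (hμ : ∀ x ∈ C, ∀ v : EuclideanSpace ℝ (Fin n),
      (inner ℝ (fderiv ℝ f x v) v : ℝ) ≤ -c * ‖v‖ ^ 2)
    (t₀ : ℝ) (x y : ℝ → EuclideanSpace ℝ (Fin n))
    (hx : ∀ t, t₀ ≤ t → HasDerivAt x (f (x t)) t)
    (hy : ∀ t, t₀ ≤ t → HasDerivAt y (f (y t)) t)
    (hxC : ∀ t, t₀ ≤ t → x t ∈ C) (hyC : ∀ t, t₀ ≤ t → y t ∈ C) :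
    ∀ t, t₀ ≤ t → ‖x t - y t‖ ≤ Real.exp (-c * (t - t₀)) * ‖x t₀ - y t₀‖ :=
  stmt11_general f hf C hconv c hμ t₀ x y hx hy hxC hyC
end

section
/- Suppose x, y : [t₀, ∞) → ℝ are differentiable, g : ℝ → ℝ is continuously differentiable with g'(s) ≤ −c for all s in an interval J containing the ranges of x and y, and ẋ = g(x), ẏ = g(y). Then t ↦ e^{c(t−t₀)}|x(t) − y(t)| is nonincreasing; hence |x(t) − y(t)| ≤ e^{−c(t−t₀)}|x(t₀) − y(t₀)|. -/
/-!
The hypothesis `g' ≤ -c` makes `g + c·id` antitone on `J`, i.e. `g` is one-sided Lipschitz: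
`(a - b)(g a - g b) ≤ -c (a - b)²`. For `z t = e^{c(t - t₀)} (x t - y t)` this gives
`z ż = e^{2c(t - t₀)} (c u² + u (g x - g y)) ≤ 0` with `u = x - y`, so `z²`, and hence `|z|`, is
nonincreasing.
-/

open Set Real

/-- Since `c > 0`, the bound `deriv g s ≤ -c` rules out the junk value `deriv g s = 0`, so it
forces `g` to be differentiable on `J`. -/
theorem antitoneOn_add_mul_of_deriv_le {g : ℝ → ℝ} {J : Set ℝ} {c : ℝ} (hc : 0 < c)
    (hJ : Convex ℝ J) (hg' : ∀ s ∈ J, deriv g s ≤ -c) :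
    AntitoneOn (fun s => g s + c * s) J := by
  have hderiv : ∀ s ∈ J, HasDerivAt (fun s => g s + c * s) (deriv g s + c) s := fun s hs =>
    have hdiff : DifferentiableAt ℝ g s :=
      differentiableAt_of_deriv_ne_zero (by linarith [hg' s hs])
    (hdiff.hasDerivAt.add ((hasDerivAt_id s).const_mul c)).congr_deriv (by ring)
  refine antitoneOn_of_hasDerivWithinAt_nonpos hJ
    (fun s hs => (hderiv s hs).continuousAt.continuousWithinAt)
    (fun s hs => (hderiv s (interior_subset hs)).hasDerivWithinAt) fun s hs => ?_
  linarith [hg' s (interior_subset hs)]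

theorem sub_mul_sub_le_of_antitoneOn_add_mul {g : ℝ → ℝ} {J : Set ℝ} {c : ℝ}
    (h : AntitoneOn (fun s => g s + c * s) J) {a b : ℝ} (ha : a ∈ J) (hb : b ∈ J) :
    (a - b) * (g a - g b) ≤ -c * (a - b) ^ 2 := by
  rcases le_total a b with hab | hab
  · have := h ha hb hab
    nlinarith
  · have := h hb ha hab
    nlinarith

theorem antitoneOn_abs_of_mul_deriv_nonpos {z z' : ℝ → ℝ} {t₀ : ℝ}
    (hz : ∀ t, t₀ ≤ t → HasDerivAt z (z' t) t) (hzz' : ∀ t, t₀ < t → z t * z' t ≤ 0) :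
    AntitoneOn (fun t => |z t|) (Ici t₀) := by
  have hsq : ∀ t, t₀ ≤ t → HasDerivAt (fun t => z t ^ 2) (2 * (z t * z' t)) t := fun t ht =>
    ((hz t ht).fun_pow 2).congr_deriv (by ring)
  have hanti : AntitoneOn (fun t => z t ^ 2) (Ici t₀) := by
    refine antitoneOn_of_hasDerivWithinAt_nonpos (convex_Ici t₀)
      (fun t ht => (hsq t ht).continuousAt.continuousWithinAt)
      (fun t ht => (hsq t (interior_subset ht)).hasDerivWithinAt) fun t ht => ?_
    rw [interior_Ici] at ht
    linarith [hzz' t ht]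
  exact fun a ha b hb hab => sq_le_sq.mp (hanti ha hb hab)

theorem antitoneOn_exp_mul_abs_of_mul_deriv_le {u u' : ℝ → ℝ} {c t₀ : ℝ}
    (hu : ∀ t, t₀ ≤ t → HasDerivAt u (u' t) t) (huu' : ∀ t, t₀ < t → u t * u' t ≤ -c * u t ^ 2) :
    AntitoneOn (fun t => exp (c * (t - t₀)) * |u t|) (Ici t₀) := by
  have hz : ∀ t, t₀ ≤ t → HasDerivAt (fun t => exp (c * (t - t₀)) * u t)
      (exp (c * (t - t₀)) * (c * u t + u' t)) t := fun t ht => by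
    have hexp : HasDerivAt (fun t => exp (c * (t - t₀))) (exp (c * (t - t₀)) * c) t := by
      simpa using (((hasDerivAt_id t).sub_const t₀).const_mul c).exp
    exact (hexp.mul (hu t ht)).congr_deriv (by ring)
  have hzz' : ∀ t, t₀ < t →
      exp (c * (t - t₀)) * u t * (exp (c * (t - t₀)) * (c * u t + u' t)) ≤ 0 := fun t ht => by
    have hdiss : c * u t ^ 2 + u t * u' t ≤ 0 := by linarith [huu' t ht]
    calc exp (c * (t - t₀)) * u t * (exp (c * (t - t₀)) * (c * u t + u' t))
        = exp (c * (t - t₀)) ^ 2 * (c * u t ^ 2 + u t * u' t) := by ring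
      _ ≤ 0 := mul_nonpos_of_nonneg_of_nonpos (sq_nonneg _) hdiss
  simpa only [abs_mul, abs_of_pos (exp_pos _)] using antitoneOn_abs_of_mul_deriv_nonpos hz hzz'

theorem stmt19_general (c t₀ : ℝ) (hc : 0 < c) (g : ℝ → ℝ)
    (J : Set ℝ) (hJ : Convex ℝ J) (hg' : ∀ s ∈ J, deriv g s ≤ -c)
    (x y : ℝ → ℝ)
    (hxJ : ∀ t, t₀ ≤ t → x t ∈ J) (hyJ : ∀ t, t₀ ≤ t → y t ∈ J)
    (hx : ∀ t, t₀ ≤ t → HasDerivAt x (g (x t)) t)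
    (hy : ∀ t, t₀ ≤ t → HasDerivAt y (g (y t)) t) :
    AntitoneOn (fun t => Real.exp (c * (t - t₀)) * |x t - y t|) (Ici t₀) ∧
    ∀ t, t₀ ≤ t →
      |x t - y t| ≤ Real.exp (-c * (t - t₀)) * |x t₀ - y t₀| := by
  have hlip {a b : ℝ} (ha : a ∈ J) (hb : b ∈ J) : (a - b) * (g a - g b) ≤ -c * (a - b) ^ 2 :=
    sub_mul_sub_le_of_antitoneOn_add_mul (antitoneOn_add_mul_of_deriv_le hc hJ hg') ha hb
  have hanti : AntitoneOn (fun t => exp (c * (t - t₀)) * |x t - y t|) (Ici t₀) :=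
    antitoneOn_exp_mul_abs_of_mul_deriv_le (fun t ht => (hx t ht).sub (hy t ht))
      fun t ht => hlip (hxJ t ht.le) (hyJ t ht.le)
  refine ⟨hanti, fun t ht => ?_⟩
  have hle : exp (c * (t - t₀)) * |x t - y t| ≤ |x t₀ - y t₀| := by
    simpa using hanti self_mem_Ici ht ht
  rw [neg_mul, exp_neg, ← div_eq_inv_mul, le_div_iff₀ (exp_pos _)]
  linarith

/-- Scalar contraction: if g' ≤ -c on an interval J containing the ranges of
two solutions of ẋ = g(x), then e^{c(t-t₀)}|x(t)-y(t)| is nonincreasing, hence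
|x(t)-y(t)| ≤ e^{-c(t-t₀)}|x(t₀)-y(t₀)|. -/
theorem stmt19 (c t₀ : ℝ) (hc : 0 < c) (g : ℝ → ℝ) (hg : ContDiff ℝ 1 g)
    (J : Set ℝ) (hJ : Convex ℝ J) (hg' : ∀ s ∈ J, deriv g s ≤ -c)
    (x y : ℝ → ℝ)
    (hxJ : ∀ t, t₀ ≤ t → x t ∈ J) (hyJ : ∀ t, t₀ ≤ t → y t ∈ J)
    (hx : ∀ t, t₀ ≤ t → HasDerivAt x (g (x t)) t)
    (hy : ∀ t, t₀ ≤ t → HasDerivAt y (g (y t)) t) :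
    AntitoneOn (fun t => Real.exp (c * (t - t₀)) * |x t - y t|) (Ici t₀) ∧
    ∀ t, t₀ ≤ t →
      |x t - y t| ≤ Real.exp (-c * (t - t₀)) * |x t₀ - y t₀| :=
  stmt19_general c t₀ hc g J hJ hg' x y hxJ hyJ hx hy
end
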